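/- Let $\mathcal{X} \subset \mathbb{R}^d$ be a compact convex set whose span is all of $\mathbb{R}^d$, let $H$ be a symmetric positive definite $d \times d$ real matrix with $E := \{x : x^\top H x \le 1\}$, and suppose $E \subseteq \mathrm{conv}(\mathcal{X} \cup (-\mathcal{X}))$. Define the regularizer $\phi(x) := \tfrac{1}{2} x^\top H x$ and its Bregman divergence $D_\phi(u,v) := \phi(u) - \phi(v) - \langle \nabla\phi(v), u - v\rangle = \tfrac{1}{2}(u-v)^\top H (u-v)$. Then $\phi$ is $1$-strongly convex with respect to $\|\cdot\|_{\mathcal{X}}$: for all $u, v \in \mathbb{R}^d$, $D_\phi(u,v) \ge \tfrac{1}{2}\|u - v\|_{\mathcal{X}}^2$. -/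

import Mathlib

open Matrix

/-- The "dual" norm tailored to the action set `X`:
`‖z‖_{*,X} = max_{x ∈ X} |⟨x, z⟩|`. -/
noncomputable def dualNormX {d : ℕ} (X : Set (Fin d → ℝ)) (z : Fin d → ℝ) : ℝ :=
  sSup ((fun x => |x ⬝ᵥ z|) '' X)

/-- The "primal" norm tailored to the action set `X`:
`‖z‖_X = max_{y : ‖y‖_{*,X} ≤ 1} ⟨y, z⟩`. -/
noncomputable def primalNormX {d : ℕ} (X : Set (Fin d → ℝ)) (z : Fin d → ℝ) : ℝ :=
  sSup ((fun y => y ⬝ᵥ z) '' {y | dualNormX X y ≤ 1})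

/- Every `y` in the unit ball of `‖·‖_{*,X}` satisfies `|⟨w, y⟩| ≤ 1` on `X ∪ -X`, hence on its
convex hull, hence on the ellipsoid `E`. Testing this on `w = z / √(zᵀ H z) ∈ E` gives
`⟨y, z⟩ ≤ √(zᵀ H z)`, so `‖z‖_X² ≤ zᵀ H z`. -/

theorem abs_dotProduct_le_dualNormX {d : ℕ} {X : Set (Fin d → ℝ)} (hX : IsCompact X)
    {x : Fin d → ℝ} (hx : x ∈ X) (y : Fin d → ℝ) : |x ⬝ᵥ y| ≤ dualNormX X y :=
  le_csSup ((hX.image (by fun_prop)).bddAbove) ⟨x, hx, rfl⟩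

theorem dualNormX_zero {d : ℕ} (X : Set (Fin d → ℝ)) : dualNormX X 0 = 0 :=
  le_antisymm (Real.sSup_le (by rintro _ ⟨x, -, rfl⟩; simp) le_rfl)
    (Real.sSup_nonneg (by rintro _ ⟨x, -, rfl⟩; exact abs_nonneg _))

theorem convex_setOf_abs_dotProduct_le_one {n : Type*} [Fintype n] (y : n → ℝ) :
    Convex ℝ {w : n → ℝ | |w ⬝ᵥ y| ≤ 1} := by
  simp_rw [abs_le]
  exact (convex_Icc (-1 : ℝ) 1).is_linear_preimage
    ⟨fun a b => add_dotProduct a b y, fun c a => smul_dotProduct c a y⟩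

theorem convexHull_union_neg_subset_of_dualNormX_le_one {d : ℕ} {X : Set (Fin d → ℝ)}
    (hX : IsCompact X) {y : Fin d → ℝ} (hy : dualNormX X y ≤ 1) :
    convexHull ℝ (X ∪ -X) ⊆ {w | |w ⬝ᵥ y| ≤ 1} := by
  refine convexHull_min ?_ (convex_setOf_abs_dotProduct_le_one y)
  rintro w (hw | hw)
  · exact (abs_dotProduct_le_dualNormX hX hw y).trans hy
  · have := (abs_dotProduct_le_dualNormX hX (Set.mem_neg.mp hw) y).trans hy
    rwa [neg_dotProduct, abs_neg] at this

theorem abs_dotProduct_le_sqrt_of_ellipsoid_subset {n : Type*} [Fintype n]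
    {H : Matrix n n ℝ} (hH : H.PosDef) {y : n → ℝ}
    (hE : {w : n → ℝ | w ⬝ᵥ H *ᵥ w ≤ 1} ⊆ {w | |w ⬝ᵥ y| ≤ 1}) (z : n → ℝ) :
    |z ⬝ᵥ y| ≤ √(z ⬝ᵥ H *ᵥ z) := by
  rcases eq_or_ne z 0 with rfl | hz
  · simp
  have hq : 0 < z ⬝ᵥ H *ᵥ z := by simpa using hH.dotProduct_mulVec_pos hz
  have hs : 0 < √(z ⬝ᵥ H *ᵥ z) := Real.sqrt_pos.mpr hq
  have hw : (√(z ⬝ᵥ H *ᵥ z))⁻¹ • z ∈ {w : n → ℝ | w ⬝ᵥ H *ᵥ w ≤ 1} := by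
    have hsq := Real.sq_sqrt hq.le
    simp only [Set.mem_ofPred_eq, mulVec_smul, smul_dotProduct, dotProduct_smul, smul_eq_mul]
    field_simp
    exact hsq.ge
  have := hE hw
  rwa [Set.mem_ofPred_eq, smul_dotProduct, smul_eq_mul, abs_mul, abs_of_pos (inv_pos.mpr hs),
    inv_mul_le_iff₀ hs, mul_one] at this

theorem primalNormX_nonneg {d : ℕ} (X : Set (Fin d → ℝ)) {z : Fin d → ℝ}
    (hz : BddAbove ((fun y => y ⬝ᵥ z) '' {y | dualNormX X y ≤ 1})) : 0 ≤ primalNormX X z :=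
  le_csSup hz ⟨0, by simp [dualNormX_zero], zero_dotProduct z⟩

theorem stmt_8_general {d : ℕ} (X : Set (Fin d → ℝ)) (hXc : IsCompact X)
    (H : Matrix (Fin d) (Fin d) ℝ) (hpos : H.PosDef)
    (hEK : {x : Fin d → ℝ | x ⬝ᵥ H *ᵥ x ≤ 1} ⊆ convexHull ℝ (X ∪ -X)) :
    ∀ u v : Fin d → ℝ,
      (1 / 2 : ℝ) * ((u - v) ⬝ᵥ H *ᵥ (u - v)) ≥
        (1 / 2 : ℝ) * (primalNormX X (u - v)) ^ 2 := by
  intro u v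
  set z := u - v
  have hq : 0 ≤ z ⬝ᵥ H *ᵥ z := by simpa using hpos.posSemidef.dotProduct_mulVec_nonneg z
  have hupper : ∀ a ∈ (fun y => y ⬝ᵥ z) '' {y | dualNormX X y ≤ 1}, a ≤ √(z ⬝ᵥ H *ᵥ z) := by
    rintro _ ⟨y, hy, rfl⟩
    exact (dotProduct_comm y z).trans_le <| (le_abs_self _).trans <|
      abs_dotProduct_le_sqrt_of_ellipsoid_subset hpos
        (hEK.trans (convexHull_union_neg_subset_of_dualNormX_le_one hXc hy)) z
  have hle : primalNormX X z ≤ √(z ⬝ᵥ H *ᵥ z) := Real.sSup_le hupper (Real.sqrt_nonneg _)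
  have hsq := (Real.le_sqrt (primalNormX_nonneg X ⟨_, hupper⟩) hq).mp hle
  linarith

/-- The regularizer `φ(x) = ½ xᵀ H x` is `1`-strongly convex with respect to
`‖·‖_X`: its Bregman divergence `D_φ(u,v) = ½ (u-v)ᵀ H (u-v)` satisfies
`D_φ(u,v) ≥ ½ ‖u-v‖_X²`, provided `E = {x | xᵀ H x ≤ 1} ⊆ conv(X ∪ -X)`. -/
theorem stmt_8 {d : ℕ} (X : Set (Fin d → ℝ)) (hXc : IsCompact X) (hXconv : Convex ℝ X)
    (hspan : Submodule.span ℝ X = ⊤)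
    (H : Matrix (Fin d) (Fin d) ℝ) (hsymm : H.IsSymm) (hpos : H.PosDef)
    (hEK : {x : Fin d → ℝ | x ⬝ᵥ H *ᵥ x ≤ 1} ⊆ convexHull ℝ (X ∪ -X)) :
    ∀ u v : Fin d → ℝ,
      (1 / 2 : ℝ) * ((u - v) ⬝ᵥ H *ᵥ (u - v)) ≥
        (1 / 2 : ℝ) * (primalNormX X (u - v)) ^ 2 :=
  stmt_8_general X hXc H hpos hEK
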